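/- Let s ≥ 1 and let H be the (s,s)-butterfly with centres (u0,u1). Let G be the graph on the vertex set V(H) ∖ {u0,u1} = {u2,u3,u4,u5,x1,…,xs,y1,…,ys} in which two vertices are adjacent if and only if they are the ends of a path with exactly three edges in H. Then G is the bipartite graph with parts V1 = {x1,…,xs,u2,u5} and V2 = {y1,…,ys,u3,u4} in which every vertex of V1 is adjacent to every vertex of V2 except for the three pairs {u2,u4}, {u4,u5} and {u5,u3}; in particular, G is isomorphic to the complete bipartite graph K_{s+2,s+2} minus the edges of a path on four vertices. -/
import Mathlib


/-!
The `(p, q)`-butterfly with centres `(u₀, u₁)`, realised as a graph on `ℕ` with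
`u₀ = 0`, `u₁ = 1`, `u₂ = 2`, `u₃ = 3`, `u₄ = 4`, `u₅ = 5`, wing vertices
`xᵢ = 5 + i` (`1 ≤ i ≤ p`) and `yⱼ = 5 + p + j` (`1 ≤ j ≤ q`): its edges are those
of the path `u₄u₂u₀u₁u₃u₅` together with the `u₀`-wing edges `u₀xᵢ` and the
`u₁`-wing edges `u₁yⱼ`.  Its vertex set is `{0, 1, …, 5 + p + q}`.
-/

namespace Butterfly

/-- The edges of the `(p, q)`-butterfly. -/
def butterflyEdges (p q : ℕ) : Set (Sym2 ℕ) :=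
  {s(4, 2), s(2, 0), s(0, 1), s(1, 3), s(3, 5)} ∪
    {e | ∃ i : ℕ, 1 ≤ i ∧ i ≤ p ∧ e = s(0, 5 + i)} ∪
    {e | ∃ j : ℕ, 1 ≤ j ∧ j ≤ q ∧ e = s(1, 5 + p + j)}

/-- The `(p, q)`-butterfly with centres `(0, 1)`, as a simple graph on `ℕ`. -/
def butterfly (p q : ℕ) : SimpleGraph ℕ :=
  SimpleGraph.fromEdgeSet (butterflyEdges p q)

/-- `x` and `y` are the two ends of a path with exactly three edges in `H`. -/
def Linked3 (H : SimpleGraph ℕ) (x y : ℕ) : Prop :=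
  ∃ a b : ℕ, H.Adj x a ∧ H.Adj a b ∧ H.Adj b y ∧ x ≠ b ∧ a ≠ y ∧ x ≠ y

/-- Membership in `V₁ = {x₁, …, x_p, u₂, u₅}`. -/
def memV1 (p v : ℕ) : Prop := v = 2 ∨ v = 5 ∨ (6 ≤ v ∧ v ≤ 5 + p)

/-- Membership in `V₂ = {y₁, …, y_p, u₃, u₄}`. -/
def memV2 (p v : ℕ) : Prop := v = 3 ∨ v = 4 ∨ (6 + p ≤ v ∧ v ≤ 5 + p + p)

lemma adj_iff (p q x y : ℕ) : (butterfly p q).Adj x y ↔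
    ((x = 4 ∧ y = 2) ∨ (x = 2 ∧ y = 4) ∨ (x = 2 ∧ y = 0) ∨ (x = 0 ∧ y = 2) ∨
     (x = 0 ∧ y = 1) ∨ (x = 1 ∧ y = 0) ∨ (x = 1 ∧ y = 3) ∨ (x = 3 ∧ y = 1) ∨
     (x = 3 ∧ y = 5) ∨ (x = 5 ∧ y = 3) ∨
     (x = 0 ∧ 6 ≤ y ∧ y ≤ 5 + p) ∨ (y = 0 ∧ 6 ≤ x ∧ x ≤ 5 + p) ∨
     (x = 1 ∧ 6 + p ≤ y ∧ y ≤ 5 + p + q) ∨ (y = 1 ∧ 6 + p ≤ x ∧ x ≤ 5 + p + q)) := by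
  simp only [butterfly, butterflyEdges, SimpleGraph.fromEdgeSet_adj, Set.mem_union,
    Set.mem_insert_iff, Set.mem_singleton_iff, Set.mem_setOf_eq, Sym2.eq_iff]
  constructor
  · rintro ⟨(((h|h)|(h|h)|(h|h)|(h|h)|h|h) | ⟨i, h1, h2, h3 | h3⟩) | ⟨j, h1, h2, h3 | h3⟩, hne⟩
    · exact Or.inl h
    · exact Or.inr (Or.inl h)
    · exact Or.inr (Or.inr (Or.inl h))
    · exact Or.inr (Or.inr (Or.inr (Or.inl h)))
    · exact Or.inr (Or.inr (Or.inr (Or.inr (Or.inl h))))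
    · exact Or.inr (Or.inr (Or.inr (Or.inr (Or.inr (Or.inl h)))))
    · exact Or.inr (Or.inr (Or.inr (Or.inr (Or.inr (Or.inr (Or.inl h))))))
    · exact Or.inr (Or.inr (Or.inr (Or.inr (Or.inr (Or.inr (Or.inr (Or.inl h)))))))
    · exact Or.inr (Or.inr (Or.inr (Or.inr (Or.inr (Or.inr (Or.inr (Or.inr (Or.inl h))))))))
    · exact Or.inr (Or.inr (Or.inr (Or.inr (Or.inr (Or.inr (Or.inr (Or.inr (Or.inr (Or.inl h)))))))))
    · refine Or.inr (Or.inr (Or.inr (Or.inr (Or.inr (Or.inr (Or.inr (Or.inr (Or.inr (Or.inr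
        (Or.inl ⟨h3.1, by omega, by omega⟩))))))))))
    · refine Or.inr (Or.inr (Or.inr (Or.inr (Or.inr (Or.inr (Or.inr (Or.inr (Or.inr (Or.inr
        (Or.inr (Or.inl ⟨h3.2, by omega, by omega⟩)))))))))))
    · refine Or.inr (Or.inr (Or.inr (Or.inr (Or.inr (Or.inr (Or.inr (Or.inr (Or.inr (Or.inr
        (Or.inr (Or.inr (Or.inl ⟨h3.1, by omega, by omega⟩))))))))))))
    · refine Or.inr (Or.inr (Or.inr (Or.inr (Or.inr (Or.inr (Or.inr (Or.inr (Or.inr (Or.inr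
        (Or.inr (Or.inr (Or.inr ⟨h3.2, by omega, by omega⟩))))))))))))
  · rintro (h|h|h|h|h|h|h|h|h|h|h|h|h|h)
    · exact ⟨Or.inl (Or.inl (Or.inl (Or.inl h))), by omega⟩
    · exact ⟨Or.inl (Or.inl (Or.inl (Or.inr h))), by omega⟩
    · exact ⟨Or.inl (Or.inl (Or.inr (Or.inl (Or.inl h)))), by omega⟩
    · exact ⟨Or.inl (Or.inl (Or.inr (Or.inl (Or.inr h)))), by omega⟩
    · exact ⟨Or.inl (Or.inl (Or.inr (Or.inr (Or.inl (Or.inl h))))), by omega⟩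
    · exact ⟨Or.inl (Or.inl (Or.inr (Or.inr (Or.inl (Or.inr h))))), by omega⟩
    · exact ⟨Or.inl (Or.inl (Or.inr (Or.inr (Or.inr (Or.inl (Or.inl h)))))), by omega⟩
    · exact ⟨Or.inl (Or.inl (Or.inr (Or.inr (Or.inr (Or.inl (Or.inr h)))))), by omega⟩
    · exact ⟨Or.inl (Or.inl (Or.inr (Or.inr (Or.inr (Or.inr (Or.inl h)))))), by omega⟩
    · exact ⟨Or.inl (Or.inl (Or.inr (Or.inr (Or.inr (Or.inr (Or.inr h)))))), by omega⟩
    · exact ⟨Or.inl (Or.inr ⟨y - 5, by omega, by omega, Or.inl ⟨h.1, by omega⟩⟩), by omega⟩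
    · exact ⟨Or.inl (Or.inr ⟨x - 5, by omega, by omega, Or.inr ⟨by omega, h.1⟩⟩), by omega⟩
    · exact ⟨Or.inr ⟨y - 5 - p, by omega, by omega, Or.inl ⟨h.1, by omega⟩⟩, by omega⟩
    · exact ⟨Or.inr ⟨x - 5 - p, by omega, by omega, Or.inr ⟨by omega, h.1⟩⟩, by omega⟩

lemma adj42 (p q : ℕ) : (butterfly p q).Adj 4 2 :=
  (adj_iff ..).mpr (Or.inl ⟨rfl, rfl⟩)
lemma adj20 (p q : ℕ) : (butterfly p q).Adj 2 0 :=
  (adj_iff ..).mpr (Or.inr (Or.inr (Or.inl ⟨rfl, rfl⟩)))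
lemma adj01 (p q : ℕ) : (butterfly p q).Adj 0 1 :=
  (adj_iff ..).mpr (Or.inr (Or.inr (Or.inr (Or.inr (Or.inl ⟨rfl, rfl⟩)))))
lemma adj13 (p q : ℕ) : (butterfly p q).Adj 1 3 :=
  (adj_iff ..).mpr (Or.inr (Or.inr (Or.inr (Or.inr (Or.inr (Or.inr (Or.inl ⟨rfl, rfl⟩)))))))
lemma adj35 (p q : ℕ) : (butterfly p q).Adj 3 5 :=
  (adj_iff ..).mpr (Or.inr (Or.inr (Or.inr (Or.inr (Or.inr (Or.inr (Or.inr (Or.inr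
    (Or.inl ⟨rfl, rfl⟩)))))))))
lemma adj0x (p q x : ℕ) (h1 : 6 ≤ x) (h2 : x ≤ 5 + p) : (butterfly p q).Adj 0 x :=
  (adj_iff ..).mpr (Or.inr (Or.inr (Or.inr (Or.inr (Or.inr (Or.inr (Or.inr (Or.inr (Or.inr
    (Or.inr (Or.inl ⟨rfl, h1, h2⟩)))))))))))
lemma adj1y (p q y : ℕ) (h1 : 6 + p ≤ y) (h2 : y ≤ 5 + p + q) : (butterfly p q).Adj 1 y :=
  (adj_iff ..).mpr (Or.inr (Or.inr (Or.inr (Or.inr (Or.inr (Or.inr (Or.inr (Or.inr (Or.inr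
    (Or.inr (Or.inr (Or.inr (Or.inl ⟨rfl, h1, h2⟩)))))))))))))

/-- Let `p ≥ 1` and let `H` be the `(p, p)`-butterfly with centres `(u₀, u₁)`.  Two
vertices `v, w ∈ V(H) ∖ {u₀, u₁}` are the ends of a path with exactly three edges
in `H` if and only if one of them lies in `V₁ = {x₁, …, x_p, u₂, u₅}`, the other in
`V₂ = {y₁, …, y_p, u₃, u₄}`, and `{v, w}` is none of the three pairs `{u₂, u₄}`,
`{u₄, u₅}`, `{u₅, u₃}`; i.e. the derived graph is the complete bipartite graph
`K_{p+2,p+2}` minus the edges of a path on four vertices. -/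
theorem butterfly_linked3_characterisation (p : ℕ) (hp : 1 ≤ p)
    (v w : ℕ) (hv : v ∈ Finset.range (6 + p + p)) (hw : w ∈ Finset.range (6 + p + p))
    (hv0 : v ≠ 0) (hv1 : v ≠ 1) (hw0 : w ≠ 0) (hw1 : w ≠ 1) :
    Linked3 (butterfly p p) v w ↔
      ((memV1 p v ∧ memV2 p w) ∨ (memV1 p w ∧ memV2 p v)) ∧
        s(v, w) ∉ ({s(2, 4), s(4, 5), s(5, 3)} : Set (Sym2 ℕ)) := by
  simp only [Finset.mem_range] at hv hw
  simp only [Linked3, memV1, memV2, Set.mem_insert_iff, Set.mem_singleton_iff, Sym2.eq_iff]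
  constructor
  · rintro ⟨a, b, h1, h2, h3, hvb, haw, hvw⟩
    rw [adj_iff] at h1 h2 h3
    rcases h1 with h1|h1|h1|h1|h1|h1|h1|h1|h1|h1|h1|h1|h1|h1 <;>
      rcases h3 with h3|h3|h3|h3|h3|h3|h3|h3|h3|h3|h3|h3|h3|h3 <;>
      omega
  · rintro ⟨hmem, hnot⟩
    have key : ∀ v' w' : ℕ, (v' = 2 ∨ v' = 5 ∨ (6 ≤ v' ∧ v' ≤ 5 + p)) →
        (w' = 3 ∨ w' = 4 ∨ (6 + p ≤ w' ∧ w' ≤ 5 + p + p)) →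
        ¬(v' = 2 ∧ w' = 4) → ¬(v' = 5 ∧ w' = 4) → ¬(v' = 5 ∧ w' = 3) →
        ∃ a b : ℕ, (butterfly p p).Adj v' a ∧ (butterfly p p).Adj a b ∧
          (butterfly p p).Adj b w' ∧ v' ≠ b ∧ a ≠ w' ∧ v' ≠ w' := by
      rintro v' w' (rfl|rfl|h1) (rfl|rfl|h2) e1 e2 e3
      · exact ⟨0, 1, adj20 p p, adj01 p p, adj13 p p, by omega, by omega, by omega⟩
      · omega
      · exact ⟨0, 1, adj20 p p, adj01 p p, adj1y p p w' (by omega) (by omega), by omega,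
          by omega, by omega⟩
      · omega
      · omega
      · exact ⟨3, 1, (adj35 p p).symm, (adj13 p p).symm, adj1y p p w' (by omega) (by omega),
          by omega, by omega, by omega⟩
      · exact ⟨0, 1, (adj0x p p v' h1.1 h1.2).symm, adj01 p p, adj13 p p, by omega, by omega,
          by omega⟩
      · exact ⟨0, 2, (adj0x p p v' h1.1 h1.2).symm, (adj20 p p).symm, (adj42 p p).symm,
          by omega, by omega, by omega⟩
      · exact ⟨0, 1, (adj0x p p v' h1.1 h1.2).symm, adj01 p p,
          adj1y p p w' (by omega) (by omega), by omega, by omega, by omega⟩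
    rcases hmem with ⟨hm1, hm2⟩ | ⟨hm1, hm2⟩
    · exact key v w hm1 hm2 (by omega) (by omega) (by omega)
    · obtain ⟨a, b, k1, k2, k3, k4, k5, k6⟩ := key w v hm1 hm2 (by omega) (by omega) (by omega)
      exact ⟨b, a, k3.symm, k2.symm, k1.symm, fun h => k5 h.symm, fun h => k4 h.symm, fun h => k6 h.symm⟩

end Butterfly
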